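/- arXiv:0712.2007 — 5 statements merged into one kernel-verified Lean document; each statement's English description precedes it below -/
import Mathlib

section
/- Let v ∈ C²([a,b]) with v'(a) = v'(b) = 0. Then ∫_a^b (-v'' - 6v' + 16v)(2v + v'' - 3v')² dx = ∫_a^b [-(v'')³ + 12(v'')²v - 48v²v'' + 64v³] dx - 72(v(b)³ - v(a)³). -/
/-!
Both sides differ by an exact derivative. With `w = v' - 2v` one has the pointwise identity
`(-v'' - 6v' + 16v)(2v + v'' - 3v')² = (4v - v'')³ + 27 w² w'`, the right-hand integrand is
`(4v - v'')³`, and `∫ 27 w² w' = 9 (w(b)³ - w(a)³)`, which equals `-72 (v(b)³ - v(a)³)` since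
`v'` vanishes at both endpoints.
-/

open Set MeasureTheory intervalIntegral

lemma integral_three_mul_sq_mul_deriv {w w' : ℝ → ℝ} {a b : ℝ}
    (hw : ∀ x ∈ uIcc a b, HasDerivAt w (w' x) x) (hw' : IntervalIntegrable w' volume a b) :
    ∫ x in a..b, 3 * w x ^ 2 * w' x = w b ^ 3 - w a ^ 3 := by
  have hw_cont : ContinuousOn w (uIcc a b) :=
    continuousOn_of_forall_continuousAt fun x hx => (hw x hx).continuousAt
  have hcont : ContinuousOn (fun x => 3 * w x ^ 2) (uIcc a b) := by fun_prop
  refine integral_eq_sub_of_hasDerivAt (f := fun x => w x ^ 3) (fun x hx => ?_)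
    (hw'.continuousOn_mul hcont)
  simpa using (hw x hx).fun_pow 3

theorem h_g_sq_integral_minus_general (v : ℝ → ℝ) (a b : ℝ)
    (hv : ContDiff ℝ 2 v) (ha : deriv v a = 0) (hb : deriv v b = 0) :
    ∫ x in a..b, (-(deriv (deriv v) x) - 6 * deriv v x + 16 * v x) *
        (2 * v x + deriv (deriv v) x - 3 * deriv v x) ^ 2 =
      (∫ x in a..b, (-(deriv (deriv v) x) ^ 3 + 12 * (deriv (deriv v) x) ^ 2 * v x
          - 48 * v x ^ 2 * deriv (deriv v) x + 64 * v x ^ 3))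
        - 72 * (v b ^ 3 - v a ^ 3) := by
  obtain ⟨hv_diff, -, hv'⟩ := contDiff_succ_iff_deriv.mp (show ContDiff ℝ (1 + 1) v from hv)
  obtain ⟨hv'_diff, hv''_cont⟩ := contDiff_one_iff_deriv.mp hv'
  set w : ℝ → ℝ := fun x => deriv v x - 2 * v x
  set w' : ℝ → ℝ := fun x => deriv (deriv v) x - 2 * deriv v x
  have hw : ∀ x, HasDerivAt w (w' x) x := fun x =>
    (hv'_diff x).hasDerivAt.sub ((hv_diff x).hasDerivAt.const_mul 2)
  have hw'_cont : Continuous w' := hv''_cont.sub (hv'.continuous.const_mul 2)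
  have hw_cont : Continuous w := hv'.continuous.sub (hv.continuous.const_mul 2)
  have hcube_cont : Continuous fun x => (4 * v x - deriv (deriv v) x) ^ 3 :=
    ((hv.continuous.const_mul 4).sub hv''_cont).pow 3
  have hrhs_cube : ∫ x in a..b, (-(deriv (deriv v) x) ^ 3 + 12 * (deriv (deriv v) x) ^ 2 * v x
      - 48 * v x ^ 2 * deriv (deriv v) x + 64 * v x ^ 3) =
      ∫ x in a..b, (4 * v x - deriv (deriv v) x) ^ 3 :=
    integral_congr fun x _ => by ring
  calc _ = ∫ x in a..b, (4 * v x - deriv (deriv v) x) ^ 3 + 9 * (3 * w x ^ 2 * w' x) :=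
        integral_congr fun x _ => by ring
    _ = (∫ x in a..b, (4 * v x - deriv (deriv v) x) ^ 3) + 9 * (w b ^ 3 - w a ^ 3) := by
        rw [integral_add (hcube_cont.intervalIntegrable a b)
            ((by fun_prop : Continuous fun x => 9 * (3 * w x ^ 2 * w' x)).intervalIntegrable a b),
          intervalIntegral.integral_const_mul,
          integral_three_mul_sq_mul_deriv (fun x _ => hw x) (hw'_cont.intervalIntegrable a b)]
    _ = _ := by
        rw [hrhs_cube]
        simp only [w, ha, hb]
        ring

theorem h_g_sq_integral_minus (v : ℝ → ℝ) (a b : ℝ) (hab : a ≤ b)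
    (hv : ContDiff ℝ 2 v) (ha : deriv v a = 0) (hb : deriv v b = 0) :
    ∫ x in a..b, (-(deriv (deriv v) x) - 6 * deriv v x + 16 * v x) *
        (2 * v x + deriv (deriv v) x - 3 * deriv v x) ^ 2 =
      (∫ x in a..b, (-(deriv (deriv v) x) ^ 3 + 12 * (deriv (deriv v) x) ^ 2 * v x
          - 48 * v x ^ 2 * deriv (deriv v) x + 64 * v x ^ 3))
        - 72 * (v b ^ 3 - v a ^ 3) :=
  h_g_sq_integral_minus_general v a b hv ha hb
end

section
/- Let v ∈ C²([a,b]) with v'(a) = v'(b) = 0. Then ∫_a^b (-v'' + 6v' + 16v)(2v + v'' + 3v')² dx = ∫_a^b [-(v'')³ + 12(v'')²v - 48v²v'' + 64v³] dx + 72(v(b)³ - v(a)³). -/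
/-! The integrand difference is an exact derivative: with `p = v`, `q = v'`, `r = v''`,
`(-r + 6q + 16p)(2p + r + 3q)² - (-r³ + 12r²p - 48p²r + 64p³)` is the derivative of
`108p²q + 54pq² + 9q³ + 72p³`, so the fundamental theorem of calculus leaves only boundary
terms, and `v'(a) = v'(b) = 0` reduces them to `72(v(b)³ - v(a)³)`. -/

def cubicPotential (p q : ℝ) : ℝ :=
  108 * p ^ 2 * q + 54 * p * q ^ 2 + 9 * q ^ 3 + 72 * p ^ 3

theorem cubicPotential_zero_right (p : ℝ) : cubicPotential p 0 = 72 * p ^ 3 := by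
  simp [cubicPotential]

theorem hasDerivAt_cubicPotential {v w : ℝ → ℝ} {x r : ℝ}
    (hv : HasDerivAt v (w x) x) (hw : HasDerivAt w r x) :
    HasDerivAt (fun y => cubicPotential (v y) (w y))
      ((-r + 6 * w x + 16 * v x) * (2 * v x + r + 3 * w x) ^ 2
        - (-r ^ 3 + 12 * r ^ 2 * v x - 48 * v x ^ 2 * r + 64 * v x ^ 3)) x := by
  have h := ((((hv.pow 2).const_mul 108).mul hw).add ((hv.const_mul 54).mul (hw.pow 2))).add
    ((hw.pow 3).const_mul 9) |>.add ((hv.pow 3).const_mul 72)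
  refine h.congr_deriv ?_
  simp only [Pi.pow_apply]
  push_cast
  ring

theorem integral_cubic_eq_add_cubicPotential {v : ℝ → ℝ} (hv : ContDiff ℝ 2 v) (a b : ℝ) :
    ∫ x in a..b, (-(deriv (deriv v) x) + 6 * deriv v x + 16 * v x) *
        (2 * v x + deriv (deriv v) x + 3 * deriv v x) ^ 2 =
      (∫ x in a..b, (-(deriv (deriv v) x) ^ 3 + 12 * (deriv (deriv v) x) ^ 2 * v x
          - 48 * v x ^ 2 * deriv (deriv v) x + 64 * v x ^ 3))
        + (cubicPotential (v b) (deriv v b) - cubicPotential (v a) (deriv v a)) := by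
  have hv' : ContDiff ℝ 1 (deriv v) := (contDiff_succ_iff_deriv (n := 1)).mp hv |>.2.2
  have hv'' : Continuous (deriv (deriv v)) := hv'.continuous_deriv le_rfl
  have hcv := hv.continuous
  have hcv' := hv'.continuous
  have hftc := intervalIntegral.integral_eq_sub_of_hasDerivAt
    (f := fun y => cubicPotential (v y) (deriv v y)) (a := a) (b := b)
    (fun x _ => hasDerivAt_cubicPotential
      ((hv.differentiable two_ne_zero) x).hasDerivAt
      ((hv'.differentiable one_ne_zero) x).hasDerivAt)
    (by apply Continuous.intervalIntegrable; fun_prop)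
  rw [intervalIntegral.integral_sub (by apply Continuous.intervalIntegrable; fun_prop)
    (by apply Continuous.intervalIntegrable; fun_prop)] at hftc
  linarith

theorem h_g_sq_integral_plus_general (v : ℝ → ℝ) (a b : ℝ)
    (hv : ContDiff ℝ 2 v) (ha : deriv v a = 0) (hb : deriv v b = 0) :
    ∫ x in a..b, (-(deriv (deriv v) x) + 6 * deriv v x + 16 * v x) *
        (2 * v x + deriv (deriv v) x + 3 * deriv v x) ^ 2 =
      (∫ x in a..b, (-(deriv (deriv v) x) ^ 3 + 12 * (deriv (deriv v) x) ^ 2 * v x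
          - 48 * v x ^ 2 * deriv (deriv v) x + 64 * v x ^ 3))
        + 72 * (v b ^ 3 - v a ^ 3) := by
  rw [integral_cubic_eq_add_cubicPotential hv, ha, hb, cubicPotential_zero_right,
    cubicPotential_zero_right, mul_sub]

theorem h_g_sq_integral_plus (v : ℝ → ℝ) (a b : ℝ) (hab : a ≤ b)
    (hv : ContDiff ℝ 2 v) (ha : deriv v a = 0) (hb : deriv v b = 0) :
    ∫ x in a..b, (-(deriv (deriv v) x) + 6 * deriv v x + 16 * v x) *
        (2 * v x + deriv (deriv v) x + 3 * deriv v x) ^ 2 =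
      (∫ x in a..b, (-(deriv (deriv v) x) ^ 3 + 12 * (deriv (deriv v) x) ^ 2 * v x
          - 48 * v x ^ 2 * deriv (deriv v) x + 64 * v x ^ 3))
        + 72 * (v b ^ 3 - v a ^ 3) :=
  h_g_sq_integral_plus_general v a b hv ha hb
end

section
/- If M₁ ≥ M₂ ≥ m₁ ≥ 0 are real numbers, then (M₁² + M₂² - m₁²)³ ≥ (M₁³ + M₂³ - m₁³)². -/
theorem n2_inequality (M₁ M₂ m₁ : ℝ) (h1 : M₁ ≥ M₂) (h2 : M₂ ≥ m₁) (h3 : m₁ ≥ 0) :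
    (M₁ ^ 2 + M₂ ^ 2 - m₁ ^ 2) ^ 3 ≥ (M₁ ^ 3 + M₂ ^ 3 - m₁ ^ 3) ^ 2 := by
  obtain ⟨x, hx, rfl⟩ : ∃ x, 0 ≤ x ∧ M₁ = M₂ + x := ⟨M₁ - M₂, by linarith, by ring⟩
  obtain ⟨y, hy, rfl⟩ : ∃ y, 0 ≤ y ∧ M₂ = m₁ + y := ⟨M₂ - m₁, by linarith, by ring⟩
  have h3' : (0:ℝ) ≤ m₁ := h3
  have key : ((m₁ + y + x) ^ 2 + (m₁ + y) ^ 2 - m₁ ^ 2) ^ 3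
      - ((m₁ + y + x) ^ 3 + (m₁ + y) ^ 3 - m₁ ^ 3) ^ 2 =
      6*y^2*m₁^4 + 36*y^3*m₁^3 + 48*y^4*m₁^2 + 24*y^5*m₁ + 4*y^6
      + 6*x*y*m₁^4 + 54*x*y^2*m₁^3 + 96*x*y^3*m₁^2 + 60*x*y^4*m₁ + 12*x*y^5
      + 18*x^2*y*m₁^3 + 66*x^2*y^2*m₁^2 + 60*x^2*y^3*m₁ + 15*x^2*y^4
      + 18*x^3*y*m₁^2 + 30*x^3*y^2*m₁ + 10*x^3*y^3
      + 6*x^4*y*m₁ + 3*x^4*y^2 := by ring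
  have pos : (0:ℝ) ≤
      6*y^2*m₁^4 + 36*y^3*m₁^3 + 48*y^4*m₁^2 + 24*y^5*m₁ + 4*y^6
      + 6*x*y*m₁^4 + 54*x*y^2*m₁^3 + 96*x*y^3*m₁^2 + 60*x*y^4*m₁ + 12*x*y^5
      + 18*x^2*y*m₁^3 + 66*x^2*y^2*m₁^2 + 60*x^2*y^3*m₁ + 15*x^2*y^4
      + 18*x^3*y*m₁^2 + 30*x^3*y^2*m₁ + 10*x^3*y^3
      + 6*x^4*y*m₁ + 3*x^4*y^2 := by positivity
  linarith [key, pos]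
end

section
/- Let n ≥ 1 and real numbers M₁ ≥ M₂ ≥ ⋯ ≥ Mₙ ≥ 0, m₁ ≥ ⋯ ≥ m_{n-1} ≥ 0, with M_i ≥ m_{i-1} for 2 ≤ i ≤ n. Then (M₁² + Σ_{i=2}^n (M_i² - m_{i-1}²))^{1/2} ≥ (M₁³ + Σ_{i=2}^n (M_i³ - m_{i-1}³))^{1/3}. -/
/-!
The case `n = 2` is a tangent-line estimate for `t ↦ t ^ (3/2)`: writing `E = M² - m²`, one has
`M³ - m³ ≤ (3/2) M E ≤ (3/2) Y E` when `0 ≤ m ≤ M ≤ Y`, and `(Y³ + (3/2) Y E)² ≤ (Y² + E)³`.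
The general case follows by induction on `n`, applying the case `n = 2` with `Y = Aₙ`; this is
legitimate because `Mₙ ≤ Aₙ` is preserved along the induction.
-/

open Finset

lemma pow_three_add_sub_le_sqrt_pow_three {Y M m : ℝ} (hm : 0 ≤ m) (hmM : m ≤ M) (hMY : M ≤ Y) :
    Y ^ 3 + (M ^ 3 - m ^ 3) ≤ √(Y ^ 2 + (M ^ 2 - m ^ 2)) ^ 3 := by
  set E := M ^ 2 - m ^ 2
  have hE : 0 ≤ E := sub_nonneg.2 (pow_le_pow_left₀ hm hmM 2)
  have hY : 0 ≤ Y := hm.trans (hmM.trans hMY)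
  have increment_le : M ^ 3 - m ^ 3 ≤ 3 / 2 * Y * E := by
    have : 0 ≤ (M - m) ^ 2 * (M + 2 * m) := by nlinarith [sq_nonneg (M - m)]
    nlinarith [mul_le_mul_of_nonneg_right hMY hE]
  have tangent_le : Y ^ 3 + 3 / 2 * Y * E ≤ √(Y ^ 2 + E) ^ 3 := by
    refine (pow_le_pow_iff_left₀ (by positivity) (by positivity) two_ne_zero).1 ?_
    rw [← pow_mul, show 3 * 2 = 2 * 3 from rfl, pow_mul, Real.sq_sqrt (by positivity)]
    nlinarith [mul_nonneg (sq_nonneg Y) (sq_nonneg E), pow_nonneg hE 3]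
  linarith

def interlacedPowerSum (M m : ℕ → ℝ) (k n : ℕ) : ℝ :=
  M 1 ^ k + ∑ i ∈ Icc 2 n, (M i ^ k - m (i - 1) ^ k)

lemma interlacedPowerSum_one (M m : ℕ → ℝ) (k : ℕ) : interlacedPowerSum M m k 1 = M 1 ^ k := by
  simp [interlacedPowerSum]

lemma interlacedPowerSum_succ (M m : ℕ → ℝ) (k : ℕ) {n : ℕ} (hn : 1 ≤ n) :
    interlacedPowerSum M m k (n + 1) = interlacedPowerSum M m k n + (M (n + 1) ^ k - m n ^ k) := by
  rw [interlacedPowerSum, sum_Icc_succ_top (by omega), Nat.add_sub_cancel, interlacedPowerSum,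
    add_assoc]

lemma sq_le_interlacedPowerSum_two_and_le_sqrt_pow_three (M m : ℕ → ℝ) {n : ℕ} (hn : 1 ≤ n)
    (hM : ∀ i, 1 ≤ i → i < n → M (i + 1) ≤ M i) (hm : ∀ i, 1 ≤ i → i < n → 0 ≤ m i)
    (hMm : ∀ i, 2 ≤ i → i ≤ n → m (i - 1) ≤ M i) :
    M n ^ 2 ≤ interlacedPowerSum M m 2 n ∧
      interlacedPowerSum M m 3 n ≤ √(interlacedPowerSum M m 2 n) ^ 3 := by
  induction n, hn using Nat.le_induction with
  | base =>
    rw [interlacedPowerSum_one, interlacedPowerSum_one, Real.sqrt_sq_eq_abs, ← abs_pow]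
    exact ⟨le_rfl, le_abs_self _⟩
  | succ n hn ih =>
    obtain ⟨hMA, hBA⟩ := ih (fun i h1 h2 => hM i h1 (by omega)) (fun i h1 h2 => hm i h1 (by omega))
      (fun i h1 h2 => hMm i h1 (by omega))
    set A := interlacedPowerSum M m 2 n
    have hmn : 0 ≤ m n := hm n hn (by omega)
    have hmM : m n ≤ M (n + 1) := hMm (n + 1) (by omega) le_rfl
    have hMM : M (n + 1) ≤ M n := hM n hn (by omega)
    have hMY : M n ≤ √A := Real.le_sqrt_of_sq_le hMA
    rw [interlacedPowerSum_succ _ _ _ hn, interlacedPowerSum_succ _ _ _ hn]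
    constructor
    · nlinarith [pow_le_pow_left₀ hmn (hmM.trans hMM) 2]
    · have := pow_three_add_sub_le_sqrt_pow_three hmn hmM (hMM.trans hMY)
      rw [Real.sq_sqrt ((sq_nonneg _).trans hMA)] at this
      linarith

lemma antitoneOn_Icc_of_succ_le {β : Type*} [Preorder β] {f : ℕ → β} {a b : ℕ} (h : ∀ i, a ≤ i → i < b → f (i + 1) ≤ f i) :
    AntitoneOn f (Set.Icc a b) :=
  antitoneOn_of_add_one_le Set.ordConnected_Icc fun i _ hi hi' => h i hi.1 (by grind)

theorem An_ge_Bn (n : ℕ) (hn : 1 ≤ n) (M m : ℕ → ℝ)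
    (hM : ∀ i, 1 ≤ i → i < n → M (i + 1) ≤ M i) (hMn : 0 ≤ M n)
    (hm : ∀ i, 1 ≤ i → i < n - 1 → m (i + 1) ≤ m i) (hmn : 0 ≤ m (n - 1))
    (hMm : ∀ i, 2 ≤ i → i ≤ n → m (i - 1) ≤ M i) :
    Real.sqrt (M 1 ^ 2 + ∑ i ∈ Finset.Icc 2 n, (M i ^ 2 - m (i - 1) ^ 2)) ≥
      (M 1 ^ 3 + ∑ i ∈ Finset.Icc 2 n, (M i ^ 3 - m (i - 1) ^ 3)) ^ ((1:ℝ)/3) := by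
  have hm0 : ∀ i, 1 ≤ i → i < n → 0 ≤ m i := fun i h1 h2 =>
    hmn.trans (antitoneOn_Icc_of_succ_le hm ⟨h1, by omega⟩ ⟨by omega, le_rfl⟩ (by omega))
  have hM1 : 0 ≤ M 1 := hMn.trans (antitoneOn_Icc_of_succ_le hM ⟨le_rfl, hn⟩ ⟨hn, le_rfl⟩ hn)
  have hB : 0 ≤ interlacedPowerSum M m 3 n :=
    add_nonneg (pow_nonneg hM1 3) <| sum_nonneg fun i hi => by
      obtain ⟨h2, hin⟩ := mem_Icc.1 hi
      exact sub_nonneg.2 (pow_le_pow_left₀ (hm0 _ (by omega) (by omega)) (hMm i h2 hin) 3)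
  obtain ⟨-, hBA⟩ := sq_le_interlacedPowerSum_two_and_le_sqrt_pow_three M m hn hM hm0 hMm
  calc interlacedPowerSum M m 3 n ^ ((1:ℝ)/3)
      ≤ (√(interlacedPowerSum M m 2 n) ^ 3) ^ ((1:ℝ)/3) := Real.rpow_le_rpow hB hBA (by norm_num)
    _ = √(interlacedPowerSum M m 2 n) := by
      rw [one_div]
      exact_mod_cast Real.pow_rpow_inv_natCast (Real.sqrt_nonneg _) three_ne_zero
end

section
/- Suppose real numbers M₁, E₂, E₃ satisfy 0 ≤ M₁, M₁³ - (1/4)E₂M₁ + (1/72)E₃ ≤ 0, |E₂ - 1/3| ≤ δ, |E₃ - 2/3| ≤ δ with 0 < δ < 1, and M₁ ≤ √(E₂/12). Then |M₁ - 1/6| < √δ. -/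
theorem M1_close_to_one_sixth (M₁ E₂ E₃ δ : ℝ)
    (hM : 0 ≤ M₁)
    (hP : M₁ ^ 3 - (1/4) * E₂ * M₁ + (1/72) * E₃ ≤ 0)
    (hE2 : |E₂ - 1/3| ≤ δ) (hE3 : |E₃ - 2/3| ≤ δ)
    (hδ0 : 0 < δ) (hδ1 : δ < 1)
    (hup : M₁ ≤ Real.sqrt (E₂ / 12)) :
    |M₁ - 1/6| < Real.sqrt δ := by
  obtain ⟨h2l, h2u⟩ := abs_le.mp hE2
  obtain ⟨h3l, h3u⟩ := abs_le.mp hE3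
  have hM3 : M₁ < 1/3 := by
    refine lt_of_le_of_lt hup ?_
    rw [Real.sqrt_lt' (by norm_num : (0:ℝ) < 1/3)]
    nlinarith
  have key : (M₁ - 1/6)^2 < δ := by
    nlinarith [sq_nonneg (M₁ - 1/6), mul_nonneg hM (sq_nonneg (M₁ - 1/6))]
  rw [show |M₁ - 1/6| < Real.sqrt δ ↔ |M₁ - 1/6|^2 < δ from Real.lt_sqrt (abs_nonneg _), sq_abs]
  exact key
end
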